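/- For p ∈ (−∞, 0), the curvature function c_p(θ) = ((p-1)/p) (1/2)^{2(1-2/p)} (sin 2θ)^{2(1-2/p)} / [(cos θ)^{4/p̃} + (sin θ)^{4/p̃}]^{3/2} (with 1/p + 1/p̃ = 1, so 0 < p̃ < 1) is strictly increasing on (0, π/4). -/

import Mathlib

open Real Filter Topology

/-- Curvature of the α-geometry on `P¹₂`, parametrized by `ρ = (cos²θ, sin²θ)`. -/
noncomputable def cCurv (p pt θ : ℝ) : ℝ :=
  ((p - 1) / p) * (1 / 2 : ℝ) ^ (2 * (1 - 2 / p)) *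
    (Real.sin (2 * θ)) ^ (2 * (1 - 2 / p)) /
      ((Real.cos θ) ^ (4 / pt) + (Real.sin θ) ^ (4 / pt)) ^ ((3 : ℝ) / 2)

/-!
For `p < 0` the conjugate exponent satisfies `0 < p̃ < 1`, so `c_p` is a positive constant times
`(sin 2θ)^e` with `e = 2(1 - 2/p) > 0`, divided by `(cos^a θ + sin^a θ)^{3/2}` with `a = 4/p̃ > 4`.
On `(0, π/4)` the numerator increases, and the denominator decreases because
`d/dθ (cos^a θ + sin^a θ) = a sin θ cos θ (sin^{a-2} θ - cos^{a-2} θ) < 0` as `sin θ < cos θ`.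
-/

theorem StrictMonoOn.div_strictAntiOn {α β : Type*} [Preorder α] [Field β] [LinearOrder β]
    [IsStrictOrderedRing β] {f g : α → β} {s : Set α} (hf : StrictMonoOn f s)
    (hg : StrictAntiOn g s) (hf₀ : ∀ x ∈ s, 0 ≤ f x) (hg₀ : ∀ x ∈ s, 0 < g x) :
    StrictMonoOn (fun x => f x / g x) s :=
  fun _ hx y hy hxy => div_lt_div₀ (hf hx hy hxy) (hg hx hy hxy).le (hf₀ y hy) (hg₀ y hy)

theorem sin_lt_cos_of_mem_Ioo {x : ℝ} (hx : x ∈ Set.Ioo 0 (π / 4)) : sin x < cos x := by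
  obtain ⟨hx₀, hx₁⟩ := hx
  rw [← cos_pi_div_two_sub]
  exact cos_lt_cos_of_nonneg_of_le_pi (by linarith) (by linarith [pi_pos]) (by linarith)

theorem cos_rpow_add_sin_rpow_strictAntiOn {a : ℝ} (ha : 2 < a) :
    StrictAntiOn (fun θ => cos θ ^ a + sin θ ^ a) (Set.Icc 0 (π / 4)) := by
  have ha₀ : 0 ≤ a := by linarith
  refine strictAntiOn_of_deriv_neg (convex_Icc _ _) ?_ fun x hx => ?_
  · exact (continuous_cos.continuousOn.rpow_const fun _ _ => Or.inr ha₀).add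
      (continuous_sin.continuousOn.rpow_const fun _ _ => Or.inr ha₀)
  rw [interior_Icc] at hx
  have hs : 0 < sin x := sin_pos_of_pos_of_lt_pi hx.1 (by linarith [hx.2, pi_pos])
  have hc : 0 < cos x :=
    cos_pos_of_mem_Ioo ⟨by linarith [hx.1, pi_pos], by linarith [hx.2, pi_pos]⟩
  have hderiv : HasDerivAt (fun θ => cos θ ^ a + sin θ ^ a)
      (-sin x * a * cos x ^ (a - 1) + cos x * a * sin x ^ (a - 1)) x :=
    ((hasDerivAt_cos x).rpow_const (Or.inl hc.ne')).add
      ((hasDerivAt_sin x).rpow_const (Or.inl hs.ne'))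
  have hpow : sin x ^ (a - 2) < cos x ^ (a - 2) :=
    rpow_lt_rpow hs.le (sin_lt_cos_of_mem_Ioo hx) (by linarith)
  have hsplit : ∀ y : ℝ, 0 < y → y ^ (a - 1) = y * y ^ (a - 2) := fun y hy => by
    rw [← rpow_one_add' hy.le (by linarith)]; ring_nf
  rw [hderiv.deriv, hsplit _ hs, hsplit _ hc]
  calc -sin x * a * (cos x * cos x ^ (a - 2)) + cos x * a * (sin x * sin x ^ (a - 2))
      = a * (sin x * cos x) * (sin x ^ (a - 2) - cos x ^ (a - 2)) := by ring
    _ < 0 := mul_neg_of_pos_of_neg (by positivity) (by linarith)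

theorem sin_two_mul_rpow_strictMonoOn {e : ℝ} (he : 0 < e) :
    StrictMonoOn (fun θ => sin (2 * θ) ^ e) (Set.Icc 0 (π / 4)) := by
  intro x hx y hy hxy
  have hπ := pi_pos
  exact rpow_lt_rpow (sin_nonneg_of_nonneg_of_le_pi (by linarith [hx.1]) (by linarith [hx.2]))
    (strictMonoOn_sin ⟨by linarith [hx.1], by linarith [hx.2]⟩
      ⟨by linarith [hy.1], by linarith [hy.2]⟩ (by linarith)) he

/-- For `p < 0` the curvature `c_p` is strictly increasing on `(0, π/4)`. -/
theorem cCurv_strictMonoOn_of_neg (p pt : ℝ) (hp : p < 0)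
    (hpt : 1 / p + 1 / pt = 1) :
    StrictMonoOn (cCurv p pt) (Set.Ioo 0 (π / 4)) := by
  have hinv : 1 < 1 / pt := by linarith [one_div_neg.mpr hp]
  have ha : 2 < 4 / pt := by rw [div_eq_mul_one_div]; linarith
  have he : 0 < 2 * (1 - 2 / p) := by linarith [div_neg_of_pos_of_neg two_pos hp]
  have hC : 0 < (p - 1) / p * (1 / 2 : ℝ) ^ (2 * (1 - 2 / p)) :=
    mul_pos (div_pos_of_neg_of_neg (by linarith) hp) (rpow_pos_of_pos one_half_pos _)
  have hsub : Set.Ioo 0 (π / 4) ⊆ Set.Icc 0 (π / 4) := Set.Ioo_subset_Icc_self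
  have hF₀ : ∀ θ ∈ Set.Ioo 0 (π / 4), 0 < cos θ ^ (4 / pt) + sin θ ^ (4 / pt) := fun θ hθ =>
    add_pos_of_pos_of_nonneg (rpow_pos_of_pos (cos_pos_of_mem_Ioo
      ⟨by linarith [hθ.1, pi_pos], by linarith [hθ.2, pi_pos]⟩) _)
      (rpow_nonneg (sin_nonneg_of_nonneg_of_le_pi hθ.1.le (by linarith [hθ.2, pi_pos])) _)
  refine StrictMonoOn.div_strictAntiOn
    (fun x hx y hy hxy => mul_lt_mul_of_pos_left
      (sin_two_mul_rpow_strictMonoOn he (hsub hx) (hsub hy) hxy) hC)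
    (fun x hx y hy hxy => rpow_lt_rpow (hF₀ y hy).le
      (cos_rpow_add_sin_rpow_strictAntiOn ha (hsub hx) (hsub hy) hxy) (by norm_num))
    (fun x hx => mul_nonneg hC.le (rpow_nonneg
      (sin_nonneg_of_nonneg_of_le_pi (by linarith [hx.1]) (by linarith [hx.2, pi_pos])) _))
    (fun x hx => rpow_pos_of_pos (hF₀ x hx) _)
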